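/- Let S ⊂ {1,…,p−1} be a set of s change points with minimal spacing Δ ≥ c₀·p/(s+1) for a sufficiently large constant c₀ > 0. Then there exists a set S′ = {u₁,…,u_m} with 0 = u₀ < u₁ < ⋯ < u_m < u_{m+1} = p such that: (1) m ≤ C(s+1) for a constant C depending only on c₀; (2) min over t of (u_{t+1} − u_t) ≥ c₁·p/(s+1); (3) max over t of (u_{t+1} − u_t) ≤ c₂·p/(s+1); and (4) S ⊆ S′, where c₁, c₂ > 0 depend only on c₀. -/

import Mathlib

open Finset

/-- Lemma 1 of the paper: given a set `S` of change points in `{1,…,p−1}` with minimal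
spacing at least `c₀ p/(s+1)`, there is a superset `S′ ⊆ {1,…,p−1}` with `O(s+1)` points,
minimal spacing `≥ c₁ p/(s+1)` and maximal gap `≤ c₂ p/(s+1)`. -/
theorem stmt0 :
    ∀ c₀ : ℝ, 0 < c₀ → ∃ C c₁ c₂ : ℝ, 0 < C ∧ 0 < c₁ ∧ 0 < c₂ ∧
      ∀ (p s : ℕ) (S : Finset ℕ), 0 < p → S ⊆ Finset.Ioo 0 p → S.card = s →
        (∀ a ∈ S ∪ {0, p}, ∀ b ∈ S ∪ {0, p}, a ≠ b →
          c₀ * p / (s + 1) ≤ |(a : ℝ) - (b : ℝ)|) →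
        ∃ S' : Finset ℕ, S ⊆ S' ∧ S' ⊆ Finset.Ioo 0 p ∧
          (S'.card : ℝ) ≤ C * (s + 1) ∧
          (∀ a ∈ S' ∪ {0, p}, ∀ b ∈ S' ∪ {0, p}, a ≠ b →
            c₁ * p / (s + 1) ≤ |(a : ℝ) - (b : ℝ)|) ∧
          (∀ a ∈ S' ∪ {0, p}, a < p → ∃ b ∈ S' ∪ {0, p}, a < b ∧
            (b : ℝ) - (a : ℝ) ≤ c₂ * p / (s + 1)) := by
  intro c₀ hc₀
  refine ⟨1 + 2 / c₀, c₀ / 4, c₀ + 4, by positivity, by positivity, by positivity, ?_⟩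
  intro p s S hp hS hcard hsp
  have hsp1 : s + 1 ≤ p := by
    have := Finset.card_le_card hS
    rw [hcard, Nat.card_Ioo] at this
    omega
  have hs1 : (0:ℝ) < (s:ℝ) + 1 := by positivity
  set H : ℝ := c₀ * p / (s + 1) with hHdef
  have hH : 0 < H := by positivity
  set h : ℕ := ⌈H / 4⌉₊ with hhdef
  have hh1 : 1 ≤ h := Nat.one_le_ceil_iff.mpr (by positivity)
  have hhH : H / 4 ≤ (h : ℝ) := Nat.le_ceil _
  have hh4 : (h : ℝ) ≤ H / 4 + 1 := by
    have := Nat.ceil_lt_add_one (le_of_lt (show (0:ℝ) < H / 4 by positivity))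
    linarith
  set G : Finset ℕ := @Finset.filter _
      (fun m => 2 * h ∣ m ∧ ∀ a ∈ S ∪ {0, p}, (h : ℤ) ≤ |(m : ℤ) - (a : ℤ)|) (fun _ => by infer_instance) (Finset.Ioo 0 p) with hGdef
  have hGsub : G ⊆ Finset.Ioo 0 p := Finset.filter_subset _ _
  refine ⟨S ∪ G, Finset.subset_union_left, Finset.union_subset hS hGsub, ?_, ?_, ?_⟩
  · -- card bound
    have hGcard : G.card ≤ p / (2 * h) := by
      have : G ⊆ (Finset.Ioc 0 p).filter (fun x => 2 * h ∣ x) := by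
        intro x hx
        rw [hGdef, Finset.mem_filter] at hx
        rw [Finset.mem_filter]
        exact ⟨Finset.mem_Ioc.mpr ⟨(Finset.mem_Ioo.mp hx.1).1,
          le_of_lt (Finset.mem_Ioo.mp hx.1).2⟩, hx.2.1⟩
      calc G.card ≤ _ := Finset.card_le_card this
        _ = p / (2 * h) := Nat.Ioc_filter_dvd_card_eq_div p (2 * h)
    have hdivR : ((p / (2 * h) : ℕ) : ℝ) ≤ (p : ℝ) / (2 * h : ℕ) := Nat.cast_div_le
    have h2h : H / 2 ≤ ((2 * h : ℕ) : ℝ) := by push_cast; linarith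
    have h2hpos : (0:ℝ) < ((2 * h : ℕ) : ℝ) := by positivity
    have : (p : ℝ) / ((2 * h : ℕ) : ℝ) ≤ 2 * ((s:ℝ) + 1) / c₀ := by
      rw [div_le_div_iff₀ h2hpos (by positivity)]
      have heq : (H / 2) * (2 * ((s:ℝ) + 1)) = (p:ℝ) * c₀ := by
        rw [hHdef]; field_simp
      nlinarith
    have hcards : ((S ∪ G).card : ℝ) ≤ (s : ℝ) + ((p / (2*h) : ℕ) : ℝ) := by
      have := Finset.card_union_le S G
      have h2 : ((S ∪ G).card : ℝ) ≤ (S.card : ℝ) + (G.card : ℝ) := by exact_mod_cast this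
      rw [hcard] at h2
      have h3 : ((G.card : ℕ) : ℝ) ≤ ((p / (2*h) : ℕ) : ℝ) := by exact_mod_cast hGcard
      linarith
    have : ((S ∪ G).card : ℝ) ≤ (s : ℝ) + 2 * ((s:ℝ) + 1) / c₀ := by linarith
    calc ((S ∪ G).card : ℝ) ≤ (s : ℝ) + 2 * ((s:ℝ) + 1) / c₀ := this
      _ ≤ (1 + 2 / c₀) * ((s:ℝ) + 1) := by
          have heq : (1 + 2/c₀) * ((s:ℝ)+1) = ((s:ℝ)+1) + 2*((s:ℝ)+1)/c₀ := by
            field_simp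
          rw [heq]; linarith
  · -- min spacing
    intro a ha b hb hab
    have hHle : c₀ / 4 * (p:ℝ) / ((s:ℝ) + 1) = H / 4 := by rw [hHdef]; ring
    rw [hHle]
    have hclass : ∀ x ∈ (S ∪ G) ∪ ({0, p} : Finset ℕ), x ∈ S ∪ ({0, p} : Finset ℕ) ∨ x ∈ G := by
      intro x hx
      simp only [Finset.mem_union, Finset.mem_insert, Finset.mem_singleton] at hx ⊢
      tauto
    have habs : ∀ x y : ℕ, (h : ℤ) ≤ |(x:ℤ) - (y:ℤ)| → H / 4 ≤ |(x:ℝ) - (y:ℝ)| := by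
      intro x y hxy
      have : ((h:ℤ) : ℝ) ≤ |((x:ℤ) : ℝ) - ((y:ℤ) : ℝ)| := by
        rw [← abs_of_nonneg (show (0:ℝ) ≤ ((h:ℤ):ℝ) by positivity)] at *
        calc |((h:ℤ):ℝ)| = |((h:ℤ):ℝ)| := rfl
          _ ≤ |(((x:ℤ) - (y:ℤ) : ℤ) : ℝ)| := by
              rw [← Int.cast_abs, ← Int.cast_abs]
              exact_mod_cast (by simpa using hxy : |(h:ℤ)| ≤ |(x:ℤ) - (y:ℤ)|)
          _ = |((x:ℤ):ℝ) - ((y:ℤ):ℝ)| := by push_cast; ring_nf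
      push_cast at this ⊢
      linarith
    rcases hclass a ha with haS | haG <;> rcases hclass b hb with hbS | hbG
    · have := hsp a haS b hbS hab
      have h4 : H ≤ |(a:ℝ) - (b:ℝ)| := by rw [hHdef]; exact this
      linarith
    · -- a ∈ S∪{0,p}, b ∈ G
      rw [hGdef, Finset.mem_filter] at hbG
      have := habs b a (hbG.2.2 a haS)
      rw [abs_sub_comm] at this
      exact this
    · rw [hGdef, Finset.mem_filter] at haG
      exact habs a b (haG.2.2 b hbS)
    · -- both in G
      rw [hGdef, Finset.mem_filter] at haG hbG
      have hd : (2 * h : ℤ) ∣ ((a:ℤ) - (b:ℤ)) := by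
        obtain ⟨k, hk⟩ := haG.2.1
        obtain ⟨l, hl⟩ := hbG.2.1
        exact ⟨(k:ℤ) - (l:ℤ), by push_cast [hk, hl]; ring⟩
      have hne : ((a:ℤ) - (b:ℤ)) ≠ 0 := by
        intro hcon; apply hab; omega
      have : (2 * h : ℤ) ≤ |(a:ℤ) - (b:ℤ)| :=
        Int.le_of_dvd (abs_pos.mpr hne) ((dvd_abs _ _).mpr hd)
      have : (h : ℤ) ≤ |(a:ℤ) - (b:ℤ)| := by omega
      exact habs a b this
  · -- max gap
    intro a ha hap
    set T := (((S ∪ G) ∪ ({0, p} : Finset ℕ)).filter (fun x => a < x)) with hTdef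
    have hpT : p ∈ T := by
      rw [hTdef, Finset.mem_filter]
      constructor
      · simp [Finset.mem_union]
      · exact hap
    have hTne : T.Nonempty := ⟨p, hpT⟩
    set b := T.min' hTne with hbdef
    have hbT : b ∈ T := Finset.min'_mem _ _
    have hbmem : b ∈ (S ∪ G) ∪ ({0, p} : Finset ℕ) := (Finset.mem_filter.mp hbT).1
    have hab : a < b := (Finset.mem_filter.mp hbT).2
    have hmin : ∀ x ∈ (S ∪ G) ∪ ({0, p} : Finset ℕ), a < x → b ≤ x := by
      intro x hx hax
      exact Finset.min'_le _ _ (Finset.mem_filter.mpr ⟨hx, hax⟩)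
    have hbp : b ≤ p := by
      simp only [Finset.mem_union, Finset.mem_insert, Finset.mem_singleton] at hbmem
      rcases hbmem with (hb | hb) | hb | hb
      · exact le_of_lt (Finset.mem_Ioo.mp (hS hb)).2
      · exact le_of_lt (Finset.mem_Ioo.mp (hGsub hb)).2
      · omega
      · omega
    refine ⟨b, hbmem, hab, ?_⟩
    -- key: b - a ≤ 4h - 1
    have hgap : b - a < 4 * h := by
      by_contra hcon
      push_neg at hcon
      -- find multiple of 2h in [a+h, b-h]
      set m := 2 * h * ((a + h + 2 * h - 1) / (2 * h)) with hmdef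
      have hm1 : a + h ≤ m := by
        have h4 : (a + h + 2*h - 1) % (2*h) < 2*h := Nat.mod_lt _ (by omega)
        have h5 := Nat.div_add_mod (a + h + 2*h - 1) (2*h)
        rw [hmdef]; omega
      have hm2 : m ≤ a + h + 2 * h - 1 := by
        have h5 := Nat.div_add_mod (a + h + 2*h - 1) (2*h)
        rw [hmdef]; omega
      have hm3 : m ≤ b - h := by omega
      have hmG : m ∈ G := by
        rw [hGdef, Finset.mem_filter]
        refine ⟨Finset.mem_Ioo.mpr ⟨by omega, by omega⟩, ⟨_, rfl⟩, ?_⟩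
        intro c hc
        have hcmem : c ∈ (S ∪ G) ∪ ({0, p} : Finset ℕ) := by
          simp only [Finset.mem_union, Finset.mem_insert, Finset.mem_singleton] at hc ⊢
          tauto
        rcases le_or_gt c a with hca | hca
        · have : (h : ℤ) ≤ (m:ℤ) - (c:ℤ) := by
            have : a + h ≤ m := hm1
            omega
          calc (h:ℤ) ≤ (m:ℤ) - (c:ℤ) := this
            _ ≤ |(m:ℤ) - (c:ℤ)| := le_abs_self _
        · have hbc : b ≤ c := hmin c hcmem hca
          have : (h : ℤ) ≤ (c:ℤ) - (m:ℤ) := by omega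
          calc (h:ℤ) ≤ (c:ℤ) - (m:ℤ) := this
            _ ≤ |(m:ℤ) - (c:ℤ)| := by rw [abs_sub_comm]; exact le_abs_self _
      have hmmem : m ∈ (S ∪ G) ∪ ({0, p} : Finset ℕ) := by
        simp only [Finset.mem_union]; tauto
      have := hmin m hmmem (by omega)
      omega
    -- now cast
    have hbcast : (b : ℝ) - (a : ℝ) ≤ 4 * (h : ℝ) := by
      have : ((b - a : ℕ) : ℝ) ≤ ((4 * h : ℕ) : ℝ) := by exact_mod_cast le_of_lt hgap
      push_cast at this
      have hba : (a:ℝ) ≤ (b:ℝ) := by exact_mod_cast le_of_lt hab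
      rw [Nat.cast_sub (le_of_lt hab)] at this
      linarith
    have hL1 : (1:ℝ) ≤ (p:ℝ) / ((s:ℝ) + 1) := by
      rw [le_div_iff₀ hs1]
      have : ((s:ℝ) + 1) ≤ (p:ℝ) := by exact_mod_cast hsp1
      linarith
    have : 4 * (h:ℝ) ≤ H + 4 := by linarith
    have hfin : H + 4 ≤ (c₀ + 4) * (p:ℝ) / ((s:ℝ) + 1) := by
      rw [hHdef]
      have : (c₀ + 4) * (p:ℝ) / ((s:ℝ) + 1) = c₀ * (p:ℝ) / ((s:ℝ)+1) + 4 * ((p:ℝ) / ((s:ℝ)+1)) := by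
        ring
      rw [this]
      linarith
    linarith
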